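/- arXiv:1809.00281 — 5 statements merged into one kernel-verified Lean document; each statement's English description precedes it below -/
import Mathlib

section
/- If (1+t)^{d₁}...(1+t)^{d_k} is compared coefficientwise with (1+t+...+t^{d₁})···(1+t+...+t^{d_k}), then each coefficient of the latter is at most the corresponding coefficient of the former, with equality of the full polynomials if and only if all d_j = 1. -/
open Polynomial Finset

/-
Both sides are products of factors with nonnegative coefficients, and factorwise
`1 + t + ⋯ + t^d ≤ (1 + t)^d` coefficientwise since `1 ≤ C(d, i)` for `i ≤ d`;
coefficientwise domination between nonnegative polynomials is preserved by products.
For the equality case, evaluate at `t = 1`: this gives `∏ (d_j + 1) = ∏ 2^{d_j}`, while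
`d + 1 ≤ 2^d` with strict inequality once `d ≥ 2`.
-/

namespace Polynomial

section OrderedCoeff

variable {R ι : Type*} [CommSemiring R] [PartialOrder R] [IsOrderedRing R]
  {s : Finset ι} {p q : ι → R[X]}

theorem coeff_prod_nonneg (h : ∀ j ∈ s, ∀ n, 0 ≤ (p j).coeff n) (n : ℕ) :
    0 ≤ (∏ j ∈ s, p j).coeff n :=
  Finset.prod_induction p (fun r => ∀ n, 0 ≤ r.coeff n)
    (fun a b ha hb n => by
      rw [coeff_mul]
      exact sum_nonneg fun x _ => mul_nonneg (ha x.1) (hb x.2))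
    (fun n => by rw [coeff_one]; split_ifs <;> simp) h n

theorem coeff_prod_le_coeff_prod (h0 : ∀ j ∈ s, ∀ n, 0 ≤ (p j).coeff n)
    (hle : ∀ j ∈ s, ∀ n, (p j).coeff n ≤ (q j).coeff n) (n : ℕ) :
    (∏ j ∈ s, p j).coeff n ≤ (∏ j ∈ s, q j).coeff n := by
  induction s using Finset.cons_induction generalizing n with
  | empty => rfl
  | cons a s ha ih =>
    simp only [forall_mem_cons] at h0 hle
    rw [prod_cons, prod_cons, coeff_mul, coeff_mul]
    refine sum_le_sum fun x _ => mul_le_mul (hle.1 x.1) (ih h0.2 hle.2 x.2)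
      (coeff_prod_nonneg h0.2 x.2) ((h0.1 x.1).trans (hle.1 x.1))

end OrderedCoeff

theorem coeff_geom_sum_X {R : Type*} [Semiring R] (m n : ℕ) :
    (∑ i ∈ range m, (X : R[X]) ^ i).coeff n = if n < m then 1 else 0 := by
  simp only [finsetSum_coeff, coeff_X_pow, sum_ite_eq, mem_range]

theorem coeff_geom_sum_X_le_coeff_one_add_X_pow {R : Type*} [CommSemiring R] [PartialOrder R]
    [IsOrderedRing R] (d n : ℕ) :
    (∑ i ∈ range (d + 1), (X : R[X]) ^ i).coeff n ≤ ((1 + X : R[X]) ^ d).coeff n := by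
  rw [coeff_geom_sum_X, coeff_one_add_X_pow]
  split_ifs with h
  · simpa using Nat.mono_cast (α := R) (Nat.choose_pos (Nat.lt_succ_iff.mp h))
  · exact Nat.cast_nonneg _

end Polynomial

theorem Nat.add_one_lt_two_pow {d : ℕ} (hd : 2 ≤ d) : d + 1 < 2 ^ d := by
  obtain ⟨e, rfl⟩ := Nat.exists_eq_add_of_le' hd
  have := e.lt_two_pow_self
  rw [pow_add]
  omega

/-- Coefficientwise, `(1+t+⋯+t^{d₁})⋯(1+t+⋯+t^{d_k}) ≤ (1+t)^{d₁}⋯(1+t)^{d_k}`, with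
equality of polynomials if and only if all `d_j = 1`. -/
theorem prod_geom_le_prod_one_add_pow (k : ℕ) (dv : Fin k → ℕ) (hpos : ∀ j, 1 ≤ dv j) :
    (∀ n : ℕ,
        (∏ j, ∑ i ∈ Finset.range (dv j + 1), (X : Polynomial ℤ) ^ i).coeff n ≤
          (∏ j, ((1 : Polynomial ℤ) + X) ^ dv j).coeff n) ∧
      ((∏ j, ∑ i ∈ Finset.range (dv j + 1), (X : Polynomial ℤ) ^ i) =
          ∏ j, ((1 : Polynomial ℤ) + X) ^ dv j ↔ ∀ j, dv j = 1) := by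
  refine ⟨coeff_prod_le_coeff_prod
      (fun j _ n => by rw [coeff_geom_sum_X]; split_ifs <;> norm_num)
      (fun j _ => coeff_geom_sum_X_le_coeff_one_add_X_pow (dv j)),
    fun heq => ?_, fun h => ?_⟩
  · have hval : ∏ j, ((dv j : ℤ) + 1) = ∏ j, (2 : ℤ) ^ dv j := by
      simpa [eval_prod, eval_finsetSum, one_add_one_eq_two] using congrArg (eval 1) heq
    by_contra! hne
    obtain ⟨j, hj⟩ := hne
    refine hval.not_lt (prod_lt_prod (fun _ _ => by positivity)
      (fun i _ => mod_cast (dv i).lt_two_pow_self) ⟨j, mem_univ j, ?_⟩)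
    exact_mod_cast Nat.add_one_lt_two_pow (by have := hpos j; omega)
  · exact prod_congr rfl fun j _ => by
      rw [h j, sum_range_succ, sum_range_one, pow_zero, pow_one, pow_one]
end

section
/- If a (d-1)-dimensional simplicial complex Δ is PS-ear decomposable with k−1 ear attachments (i.e., there is a chain Δ₀ ⊂ Δ₁ ⊂ ... ⊂ Δ_{k-1} = Δ where Δ₀ is a PS-sphere and each Δ_{j+1} is obtained from Δ_j by attaching a PS-ear), then the reduced Euler characteristic of Δ satisfies |χ̃(Δ)| = k. -/
open Polynomial Finset

/-- The join of two complexes. -/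
def joinC {α : Type*} [DecidableEq α] (Δ₁ Δ₂ : Finset (Finset α)) : Finset (Finset α) :=
  (Δ₁ ×ˢ Δ₂).image fun p => p.1 ∪ p.2

/-- A PS-sphere: a join of boundaries of simplices, given by pairwise disjoint vertex
blocks `P`, each of size at least 2; faces are subsets of the union of the blocks
containing no full block. -/
def IsPSSphere {α : Type*} [DecidableEq α] (S : Finset (Finset α)) : Prop :=
  ∃ P : Finset (Finset α), (∀ B ∈ P, 2 ≤ B.card) ∧
    (P : Set (Finset α)).Pairwise Disjoint ∧
    S = (P.sup id).powerset.filter fun F => ∀ B ∈ P, ¬B ⊆ F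

/-- `K` is a PS-ball (a join `S * Γ_ℓ` of a PS-sphere `S` and a full simplex) with
boundary `B = S * ∂Γ_ℓ`. -/
def IsPSBall {α : Type*} [DecidableEq α] (K B : Finset (Finset α)) : Prop :=
  ∃ (S : Finset (Finset α)) (G : Finset α), IsPSSphere S ∧ G.Nonempty ∧
    Disjoint (S.sup id) G ∧ K = joinC S G.powerset ∧ B = joinC S (G.powerset.erase G)

/-- `Δ'` is obtained from `Δ` by attaching a PS-ear: a PS-ball `K` of the same
dimension with `Δ ∩ K = ∂K` and `Δ' = Δ ∪ K`. -/
def EarAttach {α : Type*} [DecidableEq α] (Δ Δ' : Finset (Finset α)) : Prop :=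
  ∃ K B : Finset (Finset α), IsPSBall K B ∧ K.sup Finset.card = Δ.sup Finset.card ∧
    Δ ∩ K = B ∧ Δ' = Δ ∪ K

/-- The reduced Euler characteristic `χ̃(Δ) = ∑_{i ≥ -1} (-1)^i f_i`, as a sum over all
faces (including the empty face). -/
def eulerChar {α : Type*} [DecidableEq α] (Δ : Finset (Finset α)) : ℤ :=
  ∑ F ∈ Δ, (-1) ^ (F.card + 1)

set_option linter.unusedSectionVars false

section Aux
variable {α : Type*} [DecidableEq α]

lemma eulerChar_join {Δ₁ Δ₂ : Finset (Finset α)}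
    (h : Disjoint (Δ₁.sup id) (Δ₂.sup id)) :
    eulerChar (joinC Δ₁ Δ₂) = -(eulerChar Δ₁ * eulerChar Δ₂) := by
  have hkey : ∀ a b : Finset α, a ∈ Δ₁ → b ∈ Δ₂ → (a ∪ b) ∩ (Δ₁.sup id) = a := by
    intro a b ha hb
    have h1 : a ⊆ Δ₁.sup id := Finset.le_sup (f := id) ha
    have h2 : b ⊆ Δ₂.sup id := Finset.le_sup (f := id) hb
    ext x
    simp only [Finset.mem_inter, Finset.mem_union]
    constructor
    · rintro ⟨hx1 | hx2, hxs⟩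
      · exact hx1
      · exact absurd hxs (Finset.disjoint_right.mp h (h2 hx2))
    · intro hx; exact ⟨Or.inl hx, h1 hx⟩
  have hkey2 : ∀ a b : Finset α, a ∈ Δ₁ → b ∈ Δ₂ → (a ∪ b) ∩ (Δ₂.sup id) = b := by
    intro a b ha hb
    have h1 : a ⊆ Δ₁.sup id := Finset.le_sup (f := id) ha
    have h2 : b ⊆ Δ₂.sup id := Finset.le_sup (f := id) hb
    ext x
    simp only [Finset.mem_inter, Finset.mem_union]
    constructor
    · rintro ⟨hx1 | hx2, hxs⟩
      · exact absurd hxs (Finset.disjoint_left.mp h (h1 hx1))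
      · exact hx2
    · intro hx; exact ⟨Or.inr hx, h2 hx⟩
  have hinj : ∀ p ∈ Δ₁ ×ˢ Δ₂, ∀ q ∈ Δ₁ ×ˢ Δ₂,
      p.1 ∪ p.2 = q.1 ∪ q.2 → p = q := by
    intro p hp q hq hpq
    simp only [Finset.mem_product] at hp hq
    have e1 : p.1 = q.1 := by
      rw [← hkey p.1 p.2 hp.1 hp.2, ← hkey q.1 q.2 hq.1 hq.2, hpq]
    have e2 : p.2 = q.2 := by
      rw [← hkey2 p.1 p.2 hp.1 hp.2, ← hkey2 q.1 q.2 hq.1 hq.2, hpq]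
    exact Prod.ext e1 e2
  unfold eulerChar joinC
  rw [Finset.sum_image hinj, Finset.sum_product]
  have : ∀ a ∈ Δ₁, ∀ b ∈ Δ₂, ((-1 : ℤ)) ^ ((a ∪ b).card + 1)
      = -(((-1 : ℤ)) ^ (a.card + 1) * ((-1 : ℤ)) ^ (b.card + 1)) := by
    intro a ha b hb
    have hd : Disjoint a b :=
      h.mono (Finset.le_sup (f := id) ha) (Finset.le_sup (f := id) hb)
    rw [Finset.card_union_of_disjoint hd]
    simp [pow_add]
  calc ∑ a ∈ Δ₁, ∑ b ∈ Δ₂, ((-1 : ℤ)) ^ ((a ∪ b).card + 1)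
      = ∑ a ∈ Δ₁, ∑ b ∈ Δ₂, -(((-1:ℤ)) ^ (a.card + 1) * ((-1:ℤ)) ^ (b.card + 1)) := by
        apply Finset.sum_congr rfl; intro a ha
        apply Finset.sum_congr rfl; intro b hb
        exact this a ha b hb
    _ = -((∑ a ∈ Δ₁, ((-1:ℤ)) ^ (a.card + 1)) * (∑ b ∈ Δ₂, ((-1:ℤ)) ^ (b.card + 1))) := by
        rw [Finset.sum_mul_sum]
        simp [Finset.sum_neg_distrib]

lemma eulerChar_powerset {G : Finset α} (hG : G.Nonempty) : eulerChar G.powerset = 0 := by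
  unfold eulerChar
  have : ∑ F ∈ G.powerset, ((-1 : ℤ)) ^ (F.card + 1) = -∑ F ∈ G.powerset, ((-1:ℤ)) ^ F.card := by
    rw [← Finset.sum_neg_distrib]
    apply Finset.sum_congr rfl; intro F _; rw [pow_succ]; ring
  rw [this, Finset.sum_powerset_neg_one_pow_card, if_neg hG.ne_empty]; ring

lemma eulerChar_powerset_erase {G : Finset α} (hG : G.Nonempty) :
    eulerChar (G.powerset.erase G) = (-1) ^ G.card := by
  unfold eulerChar
  rw [Finset.sum_erase_eq_sub (Finset.mem_powerset_self G)]
  have := eulerChar_powerset hG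
  unfold eulerChar at this
  rw [this, pow_succ]; ring

lemma sup_card_powerset_erase {G : Finset α} (hG : G.Nonempty) :
    (G.powerset.erase G).sup Finset.card = G.card - 1 := by
  apply le_antisymm
  · apply Finset.sup_le
    intro F hF
    rw [Finset.mem_erase, Finset.mem_powerset] at hF
    have : F ⊂ G := hF.2.ssubset_of_ne hF.1
    exact Nat.le_sub_one_of_lt (Finset.card_lt_card this)
  · obtain ⟨x, hx⟩ := hG
    have hmem : G.erase x ∈ G.powerset.erase G := by
      rw [Finset.mem_erase, Finset.mem_powerset]
      refine ⟨?_, Finset.erase_subset _ _⟩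
      intro h
      have hne := Finset.notMem_erase x G
      rw [h] at hne
      exact hne hx
    have := Finset.le_sup (f := Finset.card) hmem
    rwa [Finset.card_erase_of_mem hx] at this

lemma sup_card_powerset (G : Finset α) : G.powerset.sup Finset.card = G.card := by
  apply le_antisymm
  · exact Finset.sup_le fun F hF => Finset.card_le_card (Finset.mem_powerset.mp hF)
  · exact Finset.le_sup (f := Finset.card) (Finset.mem_powerset_self G)

lemma sup_join {Δ₁ Δ₂ : Finset (Finset α)} (h : Disjoint (Δ₁.sup id) (Δ₂.sup id))
    (h1 : Δ₁.Nonempty) (h2 : Δ₂.Nonempty) :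
    (joinC Δ₁ Δ₂).sup Finset.card = Δ₁.sup Finset.card + Δ₂.sup Finset.card := by
  apply le_antisymm
  · apply Finset.sup_le
    intro F hF
    simp only [joinC, Finset.mem_image, Finset.mem_product] at hF
    obtain ⟨⟨a, b⟩, ⟨ha, hb⟩, rfl⟩ := hF
    calc (a ∪ b).card ≤ a.card + b.card := Finset.card_union_le a b
      _ ≤ _ := add_le_add (Finset.le_sup ha) (Finset.le_sup hb)
  · obtain ⟨a, ha, hA⟩ := Finset.exists_mem_eq_sup Δ₁ h1 Finset.card
    obtain ⟨b, hb, hB⟩ := Finset.exists_mem_eq_sup Δ₂ h2 Finset.card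
    have hd : Disjoint a b :=
      h.mono (Finset.le_sup (f := id) ha) (Finset.le_sup (f := id) hb)
    have hmem : a ∪ b ∈ joinC Δ₁ Δ₂ := by
      simp only [joinC, Finset.mem_image, Finset.mem_product]
      exact ⟨(a, b), ⟨ha, hb⟩, rfl⟩
    have := Finset.le_sup (f := Finset.card) hmem
    rw [Finset.card_union_of_disjoint hd] at this
    rw [hA, hB]; exact this

lemma sphere_insert (B : Finset α) (P : Finset (Finset α)) (hBP : B ∉ P)
    (hB : B.Nonempty) (hd : ∀ C ∈ P, Disjoint B C) :
    ((insert B P).sup id).powerset.filter (fun F => ∀ C ∈ insert B P, ¬C ⊆ F)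
      = joinC ((P.sup id).powerset.filter fun F => ∀ C ∈ P, ¬C ⊆ F)
          (B.powerset.erase B) := by
  have hdsup : Disjoint B (P.sup id) := by
    rw [Finset.disjoint_sup_right]
    intro C hC; exact hd C hC
  ext F
  simp only [joinC, Finset.mem_image, Finset.mem_product, Finset.mem_filter,
    Finset.mem_powerset, Finset.sup_insert, Finset.mem_erase, id]
  constructor
  · rintro ⟨hsub, hnot⟩
    refine ⟨(F \ B, F ∩ B), ?memb, Finset.sdiff_union_inter F B⟩
    case memb =>
    refine ⟨⟨?_, ?_⟩, ?_, ?_⟩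
    · intro x hx
      rw [Finset.mem_sdiff] at hx
      have hm := hsub hx.1
      rw [Finset.sup_eq_union, Finset.mem_union] at hm
      exact hm.resolve_left hx.2
    · intro C hC hCs
      exact hnot C (Finset.mem_insert_of_mem hC) (hCs.trans (Finset.sdiff_subset.trans (le_refl F)))
    · intro heq
      apply hnot B (Finset.mem_insert_self B P)
      intro x hx
      have hx2 : x ∈ F ∩ B := by rw [show F ∩ B = (F \ B, F ∩ B).2 from rfl, heq]; exact hx
      exact (Finset.mem_inter.mp hx2).1
    · exact Finset.inter_subset_right
  · rintro ⟨⟨F1, F2⟩, ⟨⟨hF1sub, hF1not⟩, hF2ne, hF2sub⟩, rfl⟩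
    constructor
    · apply Finset.union_subset
      · exact hF1sub.trans Finset.subset_union_right
      · exact hF2sub.trans Finset.subset_union_left
    · intro C hC hCs
      rcases Finset.mem_insert.mp hC with rfl | hCP
      · apply hF2ne
        apply Finset.Subset.antisymm hF2sub
        intro x hx
        rcases Finset.mem_union.mp (hCs hx) with h1 | h2
        · exact absurd (hF1sub h1) (Finset.disjoint_left.mp hdsup hx)
        · exact h2
      · apply hF1not C hCP
        intro x hx
        rcases Finset.mem_union.mp (hCs hx) with h1 | h2
        · exact h1
        · exact absurd (hF2sub h2) (Finset.disjoint_right.mp (hd C hCP) hx)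

lemma empty_mem_sphereSet {P : Finset (Finset α)} (hc : ∀ B ∈ P, 2 ≤ B.card) :
    ∅ ∈ (P.sup id).powerset.filter fun F => ∀ B ∈ P, ¬B ⊆ F := by
  rw [Finset.mem_filter, Finset.mem_powerset]
  refine ⟨Finset.empty_subset _, fun B hB hsub => ?_⟩
  have h2 := hc B hB
  rw [Finset.subset_empty.mp hsub, Finset.card_empty] at h2
  omega

lemma sphereSet_sup_le {P : Finset (Finset α)} :
    ((P.sup id).powerset.filter fun F => ∀ B ∈ P, ¬B ⊆ F).sup id ⊆ P.sup id := by
  intro x hx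
  rcases Finset.mem_sup.mp hx with ⟨F, hF, hxF⟩
  exact Finset.mem_powerset.mp (Finset.mem_filter.mp hF).1 hxF

lemma sphere_char : ∀ (P : Finset (Finset α)), (∀ B ∈ P, 2 ≤ B.card) →
    ((P : Set (Finset α)).Pairwise Disjoint) →
    eulerChar ((P.sup id).powerset.filter fun F => ∀ B ∈ P, ¬B ⊆ F) =
      (-1) ^ (((P.sup id).powerset.filter fun F => ∀ B ∈ P, ¬B ⊆ F).sup Finset.card + 1) := by
  intro P
  induction P using Finset.induction_on with
  | empty => simp [eulerChar]
  | @insert B P hBP ih =>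
    intro hc hpw
    have hcP : ∀ C ∈ P, 2 ≤ C.card := fun C hC => hc C (Finset.mem_insert_of_mem hC)
    have hpwP : (P : Set (Finset α)).Pairwise Disjoint := by
      apply hpw.mono
      rw [Finset.coe_insert]
      exact Set.subset_insert _ _
    have hBcard : 2 ≤ B.card := hc B (Finset.mem_insert_self B P)
    have hBne : B.Nonempty := Finset.card_pos.mp (by omega)
    have hd : ∀ C ∈ P, Disjoint B C := by
      intro C hC
      apply hpw (by simp) (by simp [hC])
      rintro rfl; exact hBP hC
    have hdsup : Disjoint B (P.sup id) := by
      rw [Finset.disjoint_sup_right]; exact hd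
    set S := (P.sup id).powerset.filter fun F => ∀ C ∈ P, ¬C ⊆ F with hS
    have hdj : Disjoint (S.sup id) ((B.powerset.erase B).sup id) := by
      apply Disjoint.mono sphereSet_sup_le _ hdsup.symm
      apply Finset.sup_le
      intro F hF
      rw [Finset.mem_erase, Finset.mem_powerset] at hF
      exact hF.2
    have hSne : S.Nonempty := ⟨∅, empty_mem_sphereSet hcP⟩
    have hEne : (B.powerset.erase B).Nonempty := by
      refine ⟨∅, ?_⟩
      rw [Finset.mem_erase, Finset.mem_powerset]
      exact ⟨fun h => by simp [← h] at hBcard, Finset.empty_subset _⟩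
    rw [sphere_insert B P hBP hBne hd, eulerChar_join hdj, sup_join hdj hSne hEne,
      ih hcP hpwP, eulerChar_powerset_erase hBne, sup_card_powerset_erase hBne]
    rw [show S.sup Finset.card + (B.card - 1) + 1 = S.sup Finset.card + B.card by omega]
    rw [pow_add, pow_add, pow_one]; ring

lemma eulerChar_union_inter (Δ K : Finset (Finset α)) :
    eulerChar (Δ ∪ K) = eulerChar Δ + eulerChar K - eulerChar (Δ ∩ K) := by
  unfold eulerChar
  have := Finset.sum_union_inter (s₁ := Δ) (s₂ := K)
    (f := fun F : Finset α => ((-1 : ℤ)) ^ (F.card + 1))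
  linarith

lemma eulerChar_psSphere {α : Type*} [DecidableEq α] {S : Finset (Finset α)}
    (h : IsPSSphere S) : eulerChar S = (-1) ^ (S.sup Finset.card + 1) := by
  obtain ⟨P, hc, hpw, rfl⟩ := h
  exact sphere_char P hc hpw

lemma psSphere_nonempty {α : Type*} [DecidableEq α] {S : Finset (Finset α)}
    (h : IsPSSphere S) : S.Nonempty := by
  obtain ⟨P, hc, hpw, rfl⟩ := h
  exact ⟨∅, empty_mem_sphereSet hc⟩

lemma ear_step {α : Type*} [DecidableEq α] {Δ Δ' : Finset (Finset α)} (h : EarAttach Δ Δ') :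
    eulerChar Δ' = eulerChar Δ + (-1) ^ (Δ.sup Finset.card + 1) ∧
      Δ'.sup Finset.card = Δ.sup Finset.card := by
  obtain ⟨K, Bd, ⟨S, G, hS, hG, hdSG, hK, hB⟩, hsup, hint, rfl⟩ := h
  have hdK : Disjoint (S.sup id) (G.powerset.sup id) :=
    hdSG.mono_right (Finset.sup_le fun F hF => Finset.mem_powerset.mp hF)
  have hdB : Disjoint (S.sup id) ((G.powerset.erase G).sup id) :=
    hdSG.mono_right (Finset.sup_le fun F hF =>
      Finset.mem_powerset.mp (Finset.mem_erase.mp hF).2)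
  have hSne := psSphere_nonempty hS
  have hKchar : eulerChar K = 0 := by
    rw [hK, eulerChar_join hdK, eulerChar_powerset hG]; ring
  have hKsup : K.sup Finset.card = S.sup Finset.card + G.card := by
    rw [hK, sup_join hdK hSne ⟨∅, Finset.empty_mem_powerset G⟩, sup_card_powerset]
  have hD : Δ.sup Finset.card = S.sup Finset.card + G.card := by
    rw [← hsup, hKsup]
  have hBchar : eulerChar Bd = (-1 : ℤ) ^ (Δ.sup Finset.card) := by
    rw [hB, eulerChar_join hdB, eulerChar_powerset_erase hG, eulerChar_psSphere hS, hD]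
    rw [pow_add, pow_add, pow_one]; ring
  constructor
  · rw [eulerChar_union_inter, hint, hKchar, hBchar, pow_succ]; ring
  · rw [Finset.sup_union, hsup]
    exact sup_idem _

end Aux

/-- If `Δ` is PS-ear decomposable via a chain `Δ₀ ⊂ ⋯ ⊂ Δ_{k-1} = Δ` with `Δ₀` a
PS-sphere and `k-1` ear attachments, then `|χ̃(Δ)| = k`. -/
theorem eulerChar_of_earDecomposition {α : Type*} [DecidableEq α] (k : ℕ) (hk : 1 ≤ k)
    (c : ℕ → Finset (Finset α)) (h0 : IsPSSphere (c 0))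
    (hstep : ∀ j < k - 1, EarAttach (c j) (c (j + 1))) :
    (eulerChar (c (k - 1))).natAbs = k := by
  set D := (c 0).sup Finset.card with hDdef
  have key : ∀ j, j ≤ k - 1 →
      eulerChar (c j) = ((j : ℤ) + 1) * (-1) ^ (D + 1) ∧ (c j).sup Finset.card = D := by
    intro j
    induction j with
    | zero =>
      intro _
      refine ⟨?_, rfl⟩
      rw [eulerChar_psSphere h0]; ring
    | succ j ih =>
      intro hj
      obtain ⟨hcj, hsj⟩ := ih (by omega)
      obtain ⟨hchar, hsup⟩ := ear_step (hstep j (by omega))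
      refine ⟨?_, by rw [hsup, hsj]⟩
      rw [hchar, hcj, hsj]
      push_cast; ring
  obtain ⟨hc1, _⟩ := key (k - 1) le_rfl
  rw [hc1]
  have hcast : ((k - 1 : ℕ) : ℤ) + 1 = (k : ℤ) := by omega
  rw [hcast, Int.natAbs_mul, Int.natAbs_pow]
  simp
end

section
/- Let M be a loopless matroid of rank d whose independence complex satisfies h_d = k via a PS-ear decomposition with k−1 ears. Then the number of elements of the simplification (number of vertices of I(M)) satisfies f₀(I(M)) ≤ 2d + k − 1. -/
open Polynomial Finset

/-- The h-polynomial `h(Δ,t) = ∑_{i=0}^d f_{i-1} t^i (1-t)^{d-i}` of a complex of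
dimension `d-1`, written as a sum over faces. -/
noncomputable def hPoly {α : Type*} [DecidableEq α] (d : ℕ) (Δ : Finset (Finset α)) :
    Polynomial ℤ :=
  ∑ F ∈ Δ, X ^ F.card * (1 - X) ^ (d - F.card)

def PSEarDecomposable {α : Type*} [DecidableEq α] (Δ : Finset (Finset α)) : Prop :=
  ∃ (n : ℕ) (c : ℕ → Finset (Finset α)), IsPSSphere (c 0) ∧
    (∀ j < n, EarAttach (c j) (c (j + 1))) ∧ c n = Δ

/-- The independence complex of a matroid, as a finset of finsets. -/
noncomputable def indepComplex {α : Type*} [DecidableEq α] [Fintype α] (M : Matroid α) :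
    Finset (Finset α) := by
  classical exact Finset.univ.filter fun F : Finset α => M.Indep ↑F


/-! For a complex containing the empty face, `h₁ = f₀ - d`, so it suffices to show
`h₁ ≤ d + (k - 1)` along the ear decomposition.

The initial PS-sphere, the join of the boundaries of the disjoint blocks `P` on the vertex set `V`,
has `h₁ ≤ d`: deleting one vertex from each block leaves a face, so `|V| - |P| ≤ d`, while every
block has at least two vertices, so `2 |P| ≤ |V|`; hence `f₀ ≤ |V| ≤ 2d`.

Every face that an ear `K` with boundary `B` adds contains the same nonempty face `G` of the
PS-ball `K = S * 2^G`, so an ear adds no empty face and at most one vertex: `h₁` grows by at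
most one per ear. -/

lemma coeff_one_one_sub_X_pow (m : ℕ) : ((1 - X : ℤ[X]) ^ m).coeff 1 = -m := by
  induction m with
  | zero => simp [coeff_one]
  | succ m ih =>
    rw [pow_succ, mul_one_sub, coeff_sub, coeff_mul_X, ih, coeff_zero_eq_eval_zero]
    simp only [eval_pow, eval_sub, eval_one, eval_X, sub_zero, one_pow, Nat.cast_succ]
    ring

lemma coeff_one_X_pow_mul_one_sub_X_pow (c m : ℕ) :
    ((X : ℤ[X]) ^ c * (1 - X) ^ m).coeff 1 =
      (if c = 1 then 1 else 0) - if c = 0 then (m : ℤ) else 0 := by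
  rw [mul_comm, coeff_mul_X_pow']
  match c with
  | 0 => simp [coeff_one_one_sub_X_pow]
  | 1 => simp [coeff_zero_eq_eval_zero]
  | c + 2 => simp

section hPoly

variable {α : Type*} [DecidableEq α]

lemma coeff_one_hPoly (d : ℕ) (Δ : Finset (Finset α)) :
    (hPoly d Δ).coeff 1 = #{F ∈ Δ | #F = 1} - if ∅ ∈ Δ then (d : ℤ) else 0 := by
  simp only [hPoly, finsetSum_coeff, coeff_one_X_pow_mul_one_sub_X_pow, sum_sub_distrib,
    sum_boole, card_eq_zero]
  rw [sum_ite_eq']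
  simp

lemma hPoly_union (d : ℕ) (Δ K : Finset (Finset α)) :
    hPoly d (Δ ∪ K) = hPoly d Δ + hPoly d (K \ Δ) := by
  rw [← union_sdiff_self_eq_union, hPoly, sum_union disjoint_sdiff]; rfl

lemma coeff_one_hPoly_le_one {d : ℕ} {Δ : Finset (Finset α)} {G : Finset α}
    (hG : G.Nonempty) (hΔ : ∀ F ∈ Δ, G ⊆ F) : (hPoly d Δ).coeff 1 ≤ 1 := by
  have hempty : ∅ ∉ Δ := fun h => hG.ne_empty (subset_empty.mp (hΔ ∅ h))
  have hvert : #{F ∈ Δ | #F = 1} ≤ 1 := by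
    refine card_le_one.mpr fun F hF F' hF' => ?_
    rw [mem_filter] at hF hF'
    rw [← eq_of_subset_of_card_le (hΔ F hF.1) (hF.2 ▸ hG.card_pos),
      ← eq_of_subset_of_card_le (hΔ F' hF'.1) (hF'.2 ▸ hG.card_pos)]
  rw [coeff_one_hPoly, if_neg hempty]
  omega

end hPoly

lemma card_filter_card_eq_one_le {α : Type*} {S : Finset (Finset α)} {V : Finset α}
    (hS : ∀ F ∈ S, F ⊆ V) : #{F ∈ S | #F = 1} ≤ #V :=
  calc #{F ∈ S | #F = 1} ≤ #(V.powersetCard 1) := card_le_card fun F hF => by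
          rw [mem_filter] at hF
          exact mem_powersetCard.mpr ⟨hS F hF.1, hF.2⟩
    _ = #V := by rw [card_powersetCard, Nat.choose_one_right]

section PSComplexes

variable {α : Type*} [DecidableEq α]

lemma card_sup_id_eq_sum {P : Finset (Finset α)} (hP : (P : Set (Finset α)).Pairwise Disjoint) :
    #(P.sup id) = ∑ B ∈ P, #B := by
  rw [sup_eq_biUnion]
  exact card_biUnion hP

lemma exists_transversal {P : Finset (Finset α)} (hne : ∀ B ∈ P, B.Nonempty)
    (hP : (P : Set (Finset α)).Pairwise Disjoint) :
    ∃ R ⊆ P.sup id, #R = #P ∧ ∀ B ∈ P, (B ∩ R).Nonempty := by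
  choose f hf using hne
  refine ⟨P.attach.image fun B => f B.1 B.2, ?_, ?_, fun B hB => ?_⟩
  · simp only [subset_iff, mem_image, mem_attach, true_and, Subtype.exists, forall_exists_index]
    rintro _ B hB rfl
    exact mem_sup.mpr ⟨B, hB, hf B hB⟩
  · rw [card_image_of_injective, card_attach]
    rintro ⟨B, hB⟩ ⟨B', hB'⟩ heq
    have heq : f B hB = f B' hB' := heq
    by_contra hBB'
    exact disjoint_left.mp (hP hB hB' fun h => hBB' (Subtype.ext h)) (hf B hB)
      (heq ▸ hf B' hB')
  · exact ⟨f B hB, mem_inter.mpr ⟨hf B hB, mem_image.mpr ⟨⟨B, hB⟩, mem_attach _ _, rfl⟩⟩⟩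

lemma IsPSSphere.empty_mem {S : Finset (Finset α)} (hS : IsPSSphere S) : ∅ ∈ S := by
  obtain ⟨P, h2, -, rfl⟩ := hS
  refine mem_filter.mpr ⟨empty_mem_powerset _, fun B hB hB0 => ?_⟩
  have := h2 B hB
  rw [subset_empty.mp hB0, card_empty] at this
  omega

lemma IsPSSphere.card_vertices_le {S : Finset (Finset α)} {d : ℕ} (hS : IsPSSphere S)
    (hd : S.sup card ≤ d) : #{F ∈ S | #F = 1} ≤ 2 * d := by
  obtain ⟨P, h2, hP, rfl⟩ := hS
  obtain ⟨R, hRV, hRP, hR⟩ :=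
    exists_transversal (fun B hB => card_pos.mp (by linarith [h2 B hB])) hP
  set V := P.sup id
  have hface : V \ R ∈ V.powerset.filter fun F => ∀ B ∈ P, ¬B ⊆ F := by
    refine mem_filter.mpr ⟨mem_powerset.mpr sdiff_subset, fun B hB hBR => ?_⟩
    obtain ⟨a, ha⟩ := hR B hB
    exact (mem_sdiff.mp (hBR (mem_inter.mp ha).1)).2 (mem_inter.mp ha).2
  have hface_card : #(V \ R) ≤ d := (le_sup hface).trans hd
  have hPV : #P • 2 ≤ #V := card_sup_id_eq_sum hP ▸ card_nsmul_le_sum _ _ _ h2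
  rw [card_sdiff_of_subset hRV, hRP] at hface_card
  rw [smul_eq_mul] at hPV
  refine (card_filter_card_eq_one_le fun F hF => mem_powerset.mp (mem_filter.mp hF).1).trans ?_
  omega

lemma IsPSSphere.coeff_one_hPoly_le {S : Finset (Finset α)} {d : ℕ} (hS : IsPSSphere S)
    (hd : S.sup card ≤ d) : (hPoly d S).coeff 1 ≤ d := by
  rw [coeff_one_hPoly, if_pos hS.empty_mem]
  have := hS.card_vertices_le hd
  omega

lemma IsPSBall.exists_subset_of_mem_sdiff {K B : Finset (Finset α)} (h : IsPSBall K B) :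
    ∃ G : Finset α, G.Nonempty ∧ ∀ F ∈ K \ B, G ⊆ F := by
  obtain ⟨S, G, -, hG, -, rfl, rfl⟩ := h
  refine ⟨G, hG, fun F hF => ?_⟩
  obtain ⟨hFK, hFB⟩ := mem_sdiff.mp hF
  obtain ⟨⟨F₁, F₂⟩, hF₁₂, rfl⟩ := mem_image.mp hFK
  obtain ⟨hF₁, hF₂⟩ := mem_product.mp hF₁₂
  by_cases hF₂G : F₂ = G
  · exact hF₂G ▸ subset_union_right
  · exact absurd (mem_image.mpr ⟨(F₁, F₂), mem_product.mpr ⟨hF₁, mem_erase.mpr ⟨hF₂G, hF₂⟩⟩,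
      rfl⟩) hFB

lemma EarAttach.sup_card_eq {Δ Δ' : Finset (Finset α)} (h : EarAttach Δ Δ') :
    Δ'.sup card = Δ.sup card := by
  obtain ⟨K, B, -, hK, -, rfl⟩ := h
  rw [sup_union, hK, sup_idem]

lemma EarAttach.coeff_one_hPoly_le {Δ Δ' : Finset (Finset α)} (h : EarAttach Δ Δ') (d : ℕ) :
    (hPoly d Δ').coeff 1 ≤ (hPoly d Δ).coeff 1 + 1 := by
  obtain ⟨K, B, hball, -, hint, rfl⟩ := h
  obtain ⟨G, hG, hGF⟩ := hball.exists_subset_of_mem_sdiff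
  have hnew : K \ Δ = K \ B := by rw [← hint, inter_comm, sdiff_inter_self_left]
  rw [hPoly_union, coeff_add, hnew]
  linarith [coeff_one_hPoly_le_one (d := d) hG hGF]

lemma coeff_one_hPoly_le_of_earChain {c : ℕ → Finset (Finset α)} {d n : ℕ}
    (h0 : IsPSSphere (c 0)) (hstep : ∀ j < n, EarAttach (c j) (c (j + 1)))
    (hd : (c n).sup card ≤ d) : (hPoly d (c n)).coeff 1 ≤ d + n := by
  induction n with
  | zero => simpa using h0.coeff_one_hPoly_le hd
  | succ n ih =>
    have hn := hstep n n.lt_succ_self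
    have := ih (fun j hj => hstep j (by omega)) (hn.sup_card_eq ▸ hd)
    push_cast
    linarith [hn.coeff_one_hPoly_le d]

end PSComplexes

section Matroid

variable {α : Type*} [DecidableEq α] [Fintype α] {M : Matroid α}

lemma mem_indepComplex {F : Finset α} : F ∈ indepComplex M ↔ M.Indep ↑F := by
  simp [indepComplex]

lemma sup_card_indepComplex_le {B : Finset α} (hB : M.IsBase ↑B) :
    (indepComplex M).sup card ≤ #B :=
  Finset.sup_le fun F hF => by
    have := (mem_indepComplex.mp hF).encard_le_eRank
    rwa [← hB.encard_eq_eRank, Set.encard_coe_eq_coe_finsetCard,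
      Set.encard_coe_eq_coe_finsetCard, Nat.cast_le] at this

end Matroid

theorem f0_indepComplex_le_general {α : Type*} [DecidableEq α] [Fintype α] (M : Matroid α)
    (d k : ℕ) (hk : 1 ≤ k)
    (hrank : ∃ B : Finset α, M.IsBase ↑B ∧ B.card = d)
    (hdec : ∃ c : ℕ → Finset (Finset α), IsPSSphere (c 0) ∧
      (∀ j < k - 1, EarAttach (c j) (c (j + 1))) ∧ c (k - 1) = indepComplex M) :
    ((indepComplex M).filter fun F => F.card = 1).card ≤ 2 * d + k - 1 := by
  obtain ⟨B, hB, rfl⟩ := hrank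
  obtain ⟨c, h0, hstep, hc⟩ := hdec
  have hbound := coeff_one_hPoly_le_of_earChain h0 hstep (hc ▸ sup_card_indepComplex_le hB)
  have hempty : ∅ ∈ indepComplex M := mem_indepComplex.mpr (by simp)
  rw [hc, coeff_one_hPoly, if_pos hempty] at hbound
  omega

/-- If the independence complex of a loopless rank-`d` matroid has a PS-ear
decomposition with `k-1` ears and `h_d = k`, then the number of vertices satisfies
`f₀ ≤ 2d + k - 1`. -/
theorem f0_indepComplex_le {α : Type*} [DecidableEq α] [Fintype α] (M : Matroid α)
    (d k : ℕ) (hk : 1 ≤ k) (hloopless : ∀ a ∈ M.E, M.Indep {a})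
    (hrank : ∃ B : Finset α, M.IsBase ↑B ∧ B.card = d)
    (hdec : ∃ c : ℕ → Finset (Finset α), IsPSSphere (c 0) ∧
      (∀ j < k - 1, EarAttach (c j) (c (j + 1))) ∧ c (k - 1) = indepComplex M)
    (hkd : (hPoly d (indepComplex M)).coeff d = k) :
    ((indepComplex M).filter fun F => F.card = 1).card ≤ 2 * d + k - 1 :=
  f0_indepComplex_le_general M d k hk hrank hdec
end

section
/- Let (M,<) be an ordered loopless matroid. The set of nbc bases (bases containing no broken circuit) forms an order ideal in the poset Int_<(M) of bases ordered by inclusion of internally passive sets: if B' is an nbc basis and IP(B) ⊆ IP(B') for bases B, B', then B is also an nbc basis. -/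
open Finset

/-- The set `IP(B)` of internally passive elements of `B`: elements `b ∈ B` that can be
exchanged for a strictly smaller element to obtain another base. -/
noncomputable def IP {α : Type*} [DecidableEq α] [LinearOrder α] (M : Matroid α)
    (B : Finset α) : Finset α := by
  classical
  exact B.filter fun b => ∃ b', b' < b ∧ M.IsBase ((insert b' (B.erase b) : Finset α) : Set α)

/-- `C` is a circuit of `M`: a minimal dependent subset of the ground set. -/
def IsCircuitF {α : Type*} [DecidableEq α] (M : Matroid α) (C : Finset α) : Prop :=
  ↑C ⊆ M.E ∧ ¬M.Indep ↑C ∧ ∀ x ∈ C, M.Indep ↑(C.erase x)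

/-- `D` is a broken circuit: a circuit with its smallest element removed. -/
def IsBrokenCircuit {α : Type*} [DecidableEq α] [LinearOrder α] (M : Matroid α)
    (D : Finset α) : Prop :=
  ∃ (C : Finset α) (hC : C.Nonempty), IsCircuitF M C ∧ D = C.erase (C.min' hC)

/-!
If a broken circuit `C \ {c}` (with `c = min C`) lies in a base `B`, then `C` is the fundamental
circuit of `c` with respect to `B`, so every `b ∈ C \ {c}` can be exchanged for the smaller
element `c`. Hence broken circuits of `B` consist of internally passive elements, and
`IP(B) ⊆ IP(B') ⊆ B'` transports a broken circuit of `B` into `B'`.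
-/

namespace Matroid

variable {α : Type*} {M : Matroid α} {B C : Set α} {b e : α}

theorem IsCircuit.isBase_insert_sdiff_of_sdiff_subset (hC : M.IsCircuit C) (hB : M.IsBase B)
    (he : e ∈ C) (hCB : C \ {e} ⊆ B) (hbC : b ∈ C) (hbe : b ≠ e) :
    M.IsBase (insert e (B \ {b})) := by
  have hC_sub : C ⊆ insert e B := Set.sdiff_singleton_subset_iff.1 hCB
  have heB : e ∉ B := fun heB ↦
    hC.not_indep (hB.indep.subset (hC_sub.trans (Set.insert_subset heB le_rfl)))
  have hfund : C = M.fundCircuit e B := hC.eq_fundCircuit_of_subset hB.indep hC_sub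
  have hecl : e ∈ M.closure B := hB.closure_eq ▸ hC.subset_ground he
  have hindep := (hB.indep.mem_fundCircuit_iff hecl heB).1 (hfund ▸ hbC)
  rw [Set.insert_sdiff_singleton_comm hbe.symm]
  exact hB.exchange_isBase_of_indep' (hCB ⟨hbC, hbe⟩) heB hindep

end Matroid

section

variable {α : Type*} [DecidableEq α] {M : Matroid α}

theorem IsCircuitF.isCircuit {C : Finset α} (hC : IsCircuitF M C) : M.IsCircuit ↑C := by
  obtain ⟨hCE, hdep, hmin⟩ := hC
  refine Matroid.isCircuit_iff_dep_forall_sdiff_singleton_indep.2 ⟨⟨hdep, hCE⟩, fun x hx ↦ ?_⟩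
  simpa using hmin x hx

variable [LinearOrder α] {B D : Finset α}

theorem IP_subset (M : Matroid α) (B : Finset α) : IP M B ⊆ B := by
  classical
  unfold IP
  exact filter_subset _ _

theorem IsBrokenCircuit.subset_IP (hD : IsBrokenCircuit M D) (hB : M.IsBase ↑B) (hDB : D ⊆ B) :
    D ⊆ IP M B := by
  obtain ⟨C, hC, hcirc, rfl⟩ := hD
  intro b hb
  obtain ⟨hb_min, hbC⟩ := mem_erase.1 hb
  have hCB : (↑C : Set α) \ {C.min' hC} ⊆ ↑B := by
    rw [← coe_erase]
    exact_mod_cast hDB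
  simp only [IP, mem_filter, coe_insert, coe_erase]
  exact ⟨hDB hb, C.min' hC, lt_of_le_of_ne (C.min'_le b hbC) (Ne.symm hb_min),
    hcirc.isCircuit.isBase_insert_sdiff_of_sdiff_subset hB (C.min'_mem hC) hCB hbC hb_min⟩

end

theorem nbc_orderIdeal_general {α : Type*} [DecidableEq α] [LinearOrder α] (M : Matroid α)
    (B B' : Finset α)
    (hB : M.IsBase ↑B)
    (hnbc' : ∀ D : Finset α, IsBrokenCircuit M D → ¬D ⊆ B')
    (hle : IP M B ⊆ IP M B') :
    ∀ D : Finset α, IsBrokenCircuit M D → ¬D ⊆ B :=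
  fun D hD hDB ↦ hnbc' D hD ((hD.subset_IP hB hDB).trans (hle.trans (IP_subset M B')))

/-- In an ordered loopless matroid, the nbc bases form an order ideal in the poset
`Int_<(M)`: if `B'` is an nbc base and `IP(B) ⊆ IP(B')` for a base `B`, then `B` is
also an nbc base. -/
theorem nbc_orderIdeal {α : Type*} [DecidableEq α] [LinearOrder α] (M : Matroid α)
    (hloopless : ∀ a ∈ M.E, M.Indep {a}) (B B' : Finset α)
    (hB : M.IsBase ↑B) (hB' : M.IsBase ↑B')
    (hnbc' : ∀ D : Finset α, IsBrokenCircuit M D → ¬D ⊆ B')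
    (hle : IP M B ⊆ IP M B') :
    ∀ D : Finset α, IsBrokenCircuit M D → ¬D ⊆ B :=
  nbc_orderIdeal_general M B B' hB hnbc' hle
end

section
/- Let (M,<) be an ordered matroid and C a circuit with broken circuit Ĉ. If B̂ is the lexicographically smallest basis containing Ĉ, then IP(B̂) = Ĉ. -/
open Finset

/-- The lexicographic (strict) order on finsets induced by the linear order on the
ground set: at the smallest element where `A` and `B` differ, `A` has it. -/
def lexLT {α : Type*} [LinearOrder α] (A B : Finset α) : Prop :=
  ∃ x ∈ A, x ∉ B ∧ ∀ y, y < x → (y ∈ A ↔ y ∈ B)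

/-! The broken circuit `Ĉ = C \ {m}`, `m = min C`, lies in `B̂` while `m` does not, so `C` is the
fundamental circuit of `m` with respect to `B̂`; exchanging any `d ∈ Ĉ` for `m < d` therefore gives
a base, i.e. `Ĉ ⊆ IP(B̂)`. Conversely, if `b ∈ IP(B̂)` lay outside `Ĉ`, exchanging it for a smaller
element would produce a base containing `Ĉ` that precedes `B̂` lexicographically. -/

namespace Matroid

variable {α : Type*} {M : Matroid α} {B C : Set α} {e f : α}

lemma IsBase.isBase_insert_sdiff_of_isCircuit (hB : M.IsBase B) (hC : M.IsCircuit C) (he : e ∈ C)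
    (hCB : C \ {e} ⊆ B) {d : α} (hd : d ∈ C \ {e}) : M.IsBase (insert e (B \ {d})) := by
  have hCins : C ⊆ insert e B := Set.subset_insert_iff.2 (Or.inr ⟨he, hCB⟩)
  have heB : e ∉ B := fun heB ↦
    hC.not_indep (hB.indep.subset (Set.insert_eq_of_mem heB ▸ hCins))
  have hecl : e ∈ M.closure B := by rw [hB.closure_eq]; exact hC.subset_ground he
  have hdfund : d ∈ M.fundCircuit e B := hC.eq_fundCircuit_of_subset hB.indep hCins ▸ hd.1
  rw [Set.insert_sdiff_singleton_comm (Ne.symm hd.2)]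
  exact hB.exchange_isBase_of_indep' (hCB hd) heB
    ((hB.indep.mem_fundCircuit_iff hecl heB).1 hdfund)

lemma IsBase.notMem_of_isBase_insert_sdiff (hB : M.IsBase B) (he : e ∈ B) (hfe : f ≠ e)
    (hB' : M.IsBase (insert f (B \ {e}))) : f ∉ B := fun hfB ↦ by
  have hsub : insert f (B \ {e}) ⊆ B := Set.insert_subset hfB Set.sdiff_subset
  have heB' : e ∈ insert f (B \ {e}) := (hB'.eq_of_subset_isBase hB hsub).symm ▸ he
  simp [hfe.symm] at heB'

end Matroid

lemma isCircuitF_iff {α : Type*} [DecidableEq α] {M : Matroid α} {C : Finset α} :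
    IsCircuitF M C ↔ M.IsCircuit ↑C := by
  simp [IsCircuitF, Matroid.isCircuit_iff_dep_forall_sdiff_singleton_indep, Matroid.Dep,
    and_assoc, and_comm]

section OrderedMatroid

variable {α : Type*} [DecidableEq α] [LinearOrder α] {M : Matroid α}

lemma mem_IP {B : Finset α} {b : α} :
    b ∈ IP M B ↔ b ∈ B ∧ ∃ b' < b, M.IsBase (insert b' (↑B \ {b})) := by
  simp [IP]

lemma mem_of_lexLT_insert_erase {A : Finset α} {b b' : α} (hb' : b' < b)
    (h : lexLT A (insert b' (A.erase b))) : b' ∈ A := by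
  obtain ⟨x, hxA, hx, hlow⟩ := h
  obtain rfl : x = b := by
    by_contra hxb
    exact hx (mem_insert_of_mem (mem_erase.2 ⟨hxb, hxA⟩))
  exact (hlow b' hb').2 (mem_insert_self _ _)

lemma IP_subset_of_lexMin {S Bhat : Finset α} (hBhat : M.IsBase ↑Bhat) (hS : S ⊆ Bhat)
    (hmin : ∀ B : Finset α, M.IsBase ↑B → S ⊆ B → B = Bhat ∨ lexLT Bhat B) :
    IP M Bhat ⊆ S := by
  intro b hb
  obtain ⟨hbB, b', hb'b, hbase⟩ := mem_IP.1 hb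
  by_contra hbS
  have hSB : S ⊆ insert b' (Bhat.erase b) := fun x hx ↦
    mem_insert_of_mem (mem_erase.2 ⟨fun hxb ↦ hbS (hxb ▸ hx), hS hx⟩)
  have hb'B : b' ∈ Bhat := by
    rcases hmin _ (by simpa using hbase) hSB with heq | hlex
    · exact heq ▸ mem_insert_self _ _
    · exact mem_of_lexLT_insert_erase hb'b hlex
  exact hBhat.notMem_of_isBase_insert_sdiff hbB hb'b.ne hbase hb'B

lemma erase_min'_subset_IP {B C : Finset α} (hB : M.IsBase ↑B) (hC : M.IsCircuit ↑C)
    (hCne : C.Nonempty) (hCB : C.erase (C.min' hCne) ⊆ B) : C.erase (C.min' hCne) ⊆ IP M B := by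
  intro d hd
  obtain ⟨hdm, hdC⟩ := mem_erase.1 hd
  refine mem_IP.2 ⟨hCB hd, C.min' hCne, (C.min'_le d hdC).lt_of_ne (Ne.symm hdm), ?_⟩
  refine hB.isBase_insert_sdiff_of_isCircuit hC (C.min'_mem hCne) ?_ ⟨hdC, hdm⟩
  rw [← coe_erase]
  exact coe_subset.2 hCB

end OrderedMatroid

/-- If `Bhat` is the lexicographically smallest base containing the broken circuit
`Ĉ = C \ {min C}`, then `IP(Bhat) = Ĉ`. -/
theorem IP_lexMin_base {α : Type*} [DecidableEq α] [LinearOrder α] (M : Matroid α)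
    (C Bhat : Finset α) (hC : IsCircuitF M C) (hCne : C.Nonempty)
    (hBhat : M.IsBase ↑Bhat) (hsub : C.erase (C.min' hCne) ⊆ Bhat)
    (hmin : ∀ B : Finset α, M.IsBase ↑B → C.erase (C.min' hCne) ⊆ B →
      B = Bhat ∨ lexLT Bhat B) :
    IP M Bhat = C.erase (C.min' hCne) :=
  (IP_subset_of_lexMin hBhat hsub hmin).antisymm
    (erase_min'_subset_IP hBhat (isCircuitF_iff.1 hC) hCne hsub)
end
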